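/- Let H be an infinite-dimensional separable complex Hilbert space, let 0 < k₀ < k₁, and let k ↦ A_k be a map from [k₀, k₁] to the bounded self-adjoint operators on H that is continuous in the operator norm and such that each A_k is coercive. Let B be a compact self-adjoint operator on H with Re⟨B u, u⟩ > 0 for all u ≠ 0. Assume: (i) Re⟨(A_{k₀} - k₀² B) u, u⟩ > 0 for all u ≠ 0; (ii) there exists an m-dimensional subspace W of H such that Re⟨(A_{k₁} - k₁² B) u, u⟩ ≤ 0 for all u ∈ W. Then for each j ∈ {1, …, m} there exists k ∈ [k₀, k₁] such that λ_j(A_k, B) = k²; in particular there exist k ∈ [k₀, k₁] and u ∈ H, u ≠ 0, with A_k u = k² B u. -/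

import Mathlib

open scoped InnerProductSpace

/-- A bounded operator on a complex Hilbert space is coercive if
`Re⟪A u, u⟫ ≥ c ‖u‖²` for some `c > 0` and all `u`. -/
def OpCoercive {H : Type*} [NormedAddCommGroup H] [InnerProductSpace ℂ H]
    (A : H →L[ℂ] H) : Prop :=
  ∃ c : ℝ, 0 < c ∧ ∀ u : H, c * ‖u‖ ^ 2 ≤ (inner ℂ (A u) u : ℂ).re

/-- The `j`-th generalized min-max value `λ_j(A, B)`:
the infimum over all `j`-dimensional subspaces `V` of `H` of the supremum over
nonzero `u ∈ V` of `Re⟪A u, u⟫ / Re⟪B u, u⟫`. -/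
noncomputable def minmaxVal {H : Type*} [NormedAddCommGroup H] [InnerProductSpace ℂ H]
    (A B : H →L[ℂ] H) (j : ℕ) : ℝ :=
  ⨅ V : {V : Submodule ℂ H // Module.finrank ℂ V = j},
    ⨆ u : {u : H // u ∈ (V : Submodule ℂ H) ∧ u ≠ 0},
      (inner ℂ (A u) u : ℂ).re / (inner ℂ (B u) u : ℂ).re

/-!
The map `k ↦ λ_j(A_k, B)` is continuous: if `A` is coercive with constant `c` and
`‖A' - A‖ = η c` with `η < 1`, every Rayleigh ratio of `A'` lies within the factors `1 ± η` of
that of `A`, hence so does every min-max value.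

A positive definite form `A - μ B`, with `A` coercive and `B` compact, is a compact perturbation
of an invertible operator with trivial kernel, hence invertible by the Fredholm alternative; a
positive invertible operator is coercive (`‖S u‖² ≤ ‖S‖ re⟪S u, u⟫` via `√S`). This makes
`λ_j(A_{k₀}, B) > k₀²`, while testing on the `j`-dimensional subspaces of `W` gives
`λ_j(A_{k₁}, B) ≤ k₁²`, and the intermediate value theorem produces `λ_j(A_k, B) = k²`.
For `j = 1` the form `A_k - k² B` is then positive semidefinite but, by the same argument,
not positive definite; a null vector of a positive operator lies in its kernel.
-/

open Module Metric Filter Topology ContinuousLinearMap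

namespace ContinuousLinearMap

variable {H : Type*} [NormedAddCommGroup H] [InnerProductSpace ℂ H]

theorem abs_re_inner_self_le (T : H →L[ℂ] H) (u : H) :
    |(inner ℂ (T u) u).re| ≤ ‖T‖ * ‖u‖ ^ 2 :=
  calc |(inner ℂ (T u) u).re| ≤ ‖T u‖ * ‖u‖ :=
        (Complex.abs_re_le_norm _).trans (norm_inner_le_norm _ _)
    _ ≤ ‖T‖ * ‖u‖ * ‖u‖ := by gcongr; exact T.le_opNorm u
    _ = ‖T‖ * ‖u‖ ^ 2 := by ring

variable [CompleteSpace H]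

theorem IsPositive.norm_apply_sq_le {T : H →L[ℂ] H} (hT : T.IsPositive) (u : H) :
    ‖T u‖ ^ 2 ≤ ‖T‖ * T.reApplyInnerSelf u := by
  set R := CFC.sqrt T
  have hR : IsSelfAdjoint R := (CFC.sqrt_nonneg T).isSelfAdjoint
  have hRR : R * R = T := CFC.sqrt_mul_sqrt_self T ((nonneg_iff_isPositive T).2 hT)
  have hnorm : ‖T‖ = ‖R‖ ^ 2 := by
    rw [← hRR, sq, ← CStarRing.norm_star_mul_self, hR.star_eq]
  have hform : T.reApplyInnerSelf u = ‖R u‖ ^ 2 := by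
    rw [reApplyInnerSelf_apply, ← hRR, mul_apply_eq_comp, ← adjoint_inner_right,
      ← star_eq_adjoint, hR.star_eq, inner_self_eq_norm_sq]
  calc ‖T u‖ ^ 2 = ‖R (R u)‖ ^ 2 := by rw [← hRR, mul_apply_eq_comp]
    _ ≤ (‖R‖ * ‖R u‖) ^ 2 := by gcongr; exact R.le_opNorm _
    _ = ‖T‖ * T.reApplyInnerSelf u := by rw [hform, hnorm]; ring

theorem IsPositive.apply_eq_zero_of_re_inner_eq_zero {T : H →L[ℂ] H} (hT : T.IsPositive)
    {u : H} (hu : (inner ℂ (T u) u).re = 0) : T u = 0 := by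
  simpa [show T.reApplyInnerSelf u = 0 from hu] using hT.norm_apply_sq_le u

end ContinuousLinearMap

section Coercive

variable {H : Type*} [NormedAddCommGroup H] [InnerProductSpace ℂ H]

theorem OpCoercive.re_inner_nonneg {J : H →L[ℂ] H} (hJ : OpCoercive J) (u : H) :
    0 ≤ (inner ℂ (J u) u).re := by
  obtain ⟨c, hc, hcJ⟩ := hJ
  exact (by positivity : 0 ≤ c * ‖u‖ ^ 2).trans (hcJ u)

variable [CompleteSpace H]

theorem OpCoercive.isUnit {J : H →L[ℂ] H} (hJ : OpCoercive J) : IsUnit J := by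
  obtain ⟨c, hc, hcJ⟩ := hJ
  refine isUnit_of_forall_le_norm_inner_map J (c := ⟨c, hc.le⟩) hc fun u => ?_
  rw [mul_comm]
  exact (hcJ u).trans (Complex.re_le_norm _)

theorem OpCoercive.isUnit_sub_of_injective {J C : H →L[ℂ] H} (hJ : OpCoercive J)
    (hC : IsCompactOperator C) (hinj : Function.Injective (J - C)) : IsUnit (J - C) := by
  obtain ⟨J, rfl⟩ := hJ.isUnit
  set K := (↑J⁻¹ : H →L[ℂ] H) * C
  have hK : IsCompactOperator K := hC.clm_comp _
  have hJK : (J : H →L[ℂ] H) - C = J * (1 - K) := by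
    rw [mul_sub, mul_one, ← mul_assoc, Units.mul_inv, one_mul]
  rcases hK.hasEigenvalue_or_mem_resolventSet one_ne_zero with hev | hres
  · exfalso
    obtain ⟨u, hu⟩ := hev.exists_hasEigenvector
    refine hu.2 (hinj ?_)
    have hKu : K u = u := by simpa using hu.apply_eq_smul
    rw [map_zero, hJK, mul_apply_eq_comp, sub_apply, one_apply_eq_self, hKu, sub_self, map_zero]
  · rw [hJK]
    exact J.isUnit.mul (by simpa [spectrum.mem_resolventSet_iff] using hres)

theorem ContinuousLinearMap.IsPositive.opCoercive_of_isUnit {S : H →L[ℂ] H} (hS : S.IsPositive)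
    (hSu : IsUnit S) : OpCoercive S := by
  set R := (↑hSu.unit⁻¹ : H →L[ℂ] H)
  refine ⟨(‖R‖ ^ 2 * ‖S‖ + 1)⁻¹, by positivity, fun u => ?_⟩
  have hu : ‖u‖ ≤ ‖R‖ * ‖S u‖ := by
    simpa [R, ← mul_apply_eq_comp] using R.le_opNorm (S u)
  have hQ : 0 ≤ (inner ℂ (S u) u).re := hS.re_inner_nonneg_left u
  rw [inv_mul_le_iff₀ (by positivity)]
  calc ‖u‖ ^ 2 ≤ ‖R‖ ^ 2 * ‖S u‖ ^ 2 := by rw [← mul_pow]; gcongr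
    _ ≤ ‖R‖ ^ 2 * (‖S‖ * (inner ℂ (S u) u).re) := by gcongr; exact hS.norm_apply_sq_le u
    _ ≤ (‖R‖ ^ 2 * ‖S‖ + 1) * (inner ℂ (S u) u).re := by nlinarith

theorem OpCoercive.sub_of_re_inner_pos {J C : H →L[ℂ] H} (hJ : OpCoercive J)
    (hC : IsCompactOperator C) (hsa : IsSelfAdjoint (J - C))
    (hpos : ∀ u : H, u ≠ 0 → 0 < (inner ℂ (J u - C u) u).re) :
    OpCoercive (J - C) := by
  have hS : (J - C).IsPositive := by
    refine (isPositive_def' (T := J - C)).2 ⟨hsa, fun u => ?_⟩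
    rcases eq_or_ne u 0 with rfl | hu
    · simp [reApplyInnerSelf_apply]
    · exact (hpos u hu).le
  refine hS.opCoercive_of_isUnit
    (hJ.isUnit_sub_of_injective hC ((injective_iff_map_eq_zero _).2 fun u hu => ?_))
  by_contra hu0
  have h := hpos u hu0
  rw [← sub_apply, hu, inner_zero_left] at h
  exact h.false

end Coercive

theorem Submodule.exists_le_finrank_eq {K V : Type*} [DivisionRing K] [AddCommGroup V]
    [Module K V] (W : Submodule K V) {j : ℕ} (hj : (j : Cardinal) ≤ Module.rank K W) :
    ∃ U ≤ W, finrank K U = j := by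
  obtain ⟨f, hf⟩ := exists_linearIndependent_of_le_rank hj
  refine ⟨span K (Set.range (W.subtype ∘ f)), ?_, ?_⟩
  · rw [span_le]
    rintro _ ⟨i, rfl⟩
    exact (f i).2
  · rw [finrank_span_eq_card (hf.map' W.subtype W.ker_subtype), Fintype.card_fin]

theorem nonempty_finrank_eq_of_not_finiteDimensional {K V : Type*} [DivisionRing K]
    [AddCommGroup V] [Module K V] (hV : ¬ FiniteDimensional K V) (j : ℕ) :
    Nonempty {U : Submodule K V // finrank K U = j} := by
  have hrank : (j : Cardinal) ≤ Module.rank K (⊤ : Submodule K V) := by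
    rw [rank_top]
    exact Cardinal.natCast_lt_aleph0.le.trans (not_lt.1 (mt rank_lt_aleph0_iff.1 hV))
  obtain ⟨U, -, hU⟩ := (⊤ : Submodule K V).exists_le_finrank_eq hrank
  exact ⟨⟨U, hU⟩⟩

theorem re_inner_sub_ofReal_smul {H : Type*} [NormedAddCommGroup H] [InnerProductSpace ℂ H]
    (A B : H →L[ℂ] H) (u : H) (μ : ℝ) :
    (inner ℂ (A u - (μ : ℂ) • B u) u).re = (inner ℂ (A u) u).re - μ * (inner ℂ (B u) u).re := by
  rw [inner_sub_left, inner_smul_left, Complex.conj_ofReal, Complex.sub_re,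
    Complex.re_ofReal_mul]

section MinMax

variable {H : Type*} [NormedAddCommGroup H] [InnerProductSpace ℂ H] {A B : H →L[ℂ] H}

noncomputable def rayleighRatio (A B : H →L[ℂ] H) (u : H) : ℝ :=
  (inner ℂ (A u) u).re / (inner ℂ (B u) u).re

noncomputable def supRatio (A B : H →L[ℂ] H) (V : Submodule ℂ H) : ℝ :=
  ⨆ u : {u : H // u ∈ V ∧ u ≠ 0}, rayleighRatio A B u

theorem minmaxVal_eq_iInf_supRatio (A B : H →L[ℂ] H) (j : ℕ) :
    minmaxVal A B j = ⨅ V : {V : Submodule ℂ H // finrank ℂ V = j}, supRatio A B V :=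
  rfl

theorem rayleighRatio_smul {c : ℂ} (hc : c ≠ 0) (u : H) :
    rayleighRatio A B (c • u) = rayleighRatio A B u := by
  change A.reApplyInnerSelf (c • u) / B.reApplyInnerSelf (c • u) =
    A.reApplyInnerSelf u / B.reApplyInnerSelf u
  rw [A.reApplyInnerSelf_smul, B.reApplyInnerSelf_smul, mul_div_mul_left _ _ (by positivity)]

theorem nonempty_of_one_le_finrank {V : Submodule ℂ H} (hV : 1 ≤ finrank ℂ V) :
    Nonempty {u : H // u ∈ V ∧ u ≠ 0} := by
  have := Module.finite_of_finrank_pos hV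
  obtain ⟨u, hu⟩ := finrank_pos_iff_exists_ne_zero.1 hV
  exact ⟨⟨u, u.2, by simpa using hu⟩⟩

theorem supRatio_le {V : Submodule ℂ H} (hV : 1 ≤ finrank ℂ V) {M : ℝ}
    (h : ∀ u ∈ V, u ≠ 0 → rayleighRatio A B u ≤ M) : supRatio A B V ≤ M :=
  have := nonempty_of_one_le_finrank hV
  ciSup_le fun u => h u u.2.1 u.2.2

variable (hB : ∀ u : H, u ≠ 0 → 0 < (inner ℂ (B u) u).re)
include hB

theorem bddAbove_rayleighRatio (V : Submodule ℂ H) [FiniteDimensional ℂ V] :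
    BddAbove (Set.range fun u : {u : H // u ∈ V ∧ u ≠ 0} => rayleighRatio A B u) := by
  have := FiniteDimensional.proper ℂ V
  have hcont : ContinuousOn (fun x : V => rayleighRatio A B x) (sphere 0 1) := by
    refine ContinuousOn.div (by fun_prop) (by fun_prop) fun x hx => (hB x ?_).ne'
    simpa using ne_of_mem_sphere hx one_ne_zero
  obtain ⟨M, hM⟩ := (isCompact_sphere (0 : V) 1).bddAbove_image hcont
  refine ⟨M, ?_⟩
  rintro _ ⟨⟨u, huV, hu⟩, rfl⟩
  have hn : ‖u‖ ≠ 0 := norm_ne_zero_iff.2 hu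
  change rayleighRatio A B u ≤ M
  rw [← rayleighRatio_smul (A := A) (B := B) (c := (‖u‖⁻¹ : ℂ)) (by simpa using hn)]
  exact hM ⟨⟨_, V.smul_mem _ huV⟩, by simp [norm_smul, hn], rfl⟩

theorem le_supRatio (V : Submodule ℂ H) [FiniteDimensional ℂ V] {u : H} (huV : u ∈ V)
    (hu : u ≠ 0) : rayleighRatio A B u ≤ supRatio A B V :=
  le_ciSup (bddAbove_rayleighRatio hB V) ⟨u, huV, hu⟩

theorem minmaxVal_le_supRatio (hA : ∀ u : H, 0 ≤ (inner ℂ (A u) u).re) {V : Submodule ℂ H} {j : ℕ}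
    (hV : finrank ℂ V = j) : minmaxVal A B j ≤ supRatio A B V := by
  rw [minmaxVal_eq_iInf_supRatio]
  refine ciInf_le ⟨0, ?_⟩ (⟨V, hV⟩ : {V : Submodule ℂ H // finrank ℂ V = j})
  rintro _ ⟨W, rfl⟩
  exact Real.iSup_nonneg fun u => div_nonneg (hA u) (hB u u.2.2).le

theorem minmaxVal_le_of_re_inner_sub_nonpos (hA : ∀ u : H, 0 ≤ (inner ℂ (A u) u).re)
    {W : Submodule ℂ H} {μ : ℝ} (hW : ∀ u ∈ W, (inner ℂ (A u - (μ : ℂ) • B u) u).re ≤ 0)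
    {j : ℕ} (hj : 1 ≤ j) (hjW : j ≤ finrank ℂ W) : minmaxVal A B j ≤ μ := by
  have := Module.finite_of_finrank_pos (hj.trans hjW)
  obtain ⟨V, hVW, hV⟩ := W.exists_le_finrank_eq (j := j) (by
    rw [← finrank_eq_rank]; exact_mod_cast hjW)
  refine (minmaxVal_le_supRatio hB hA hV).trans (supRatio_le (hV ▸ hj) fun u hu hu0 => ?_)
  have := hW u (hVW hu)
  rw [re_inner_sub_ofReal_smul] at this
  rw [rayleighRatio, div_le_iff₀ (hB u hu0)]
  linarith

variable (hH : ¬ FiniteDimensional ℂ H)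
include hH

theorem le_minmaxVal {j : ℕ} (hj : 1 ≤ j) {x : ℝ}
    (h : ∀ u : H, u ≠ 0 → x ≤ rayleighRatio A B u) : x ≤ minmaxVal A B j := by
  have := nonempty_finrank_eq_of_not_finiteDimensional hH j
  refine le_ciInf fun ⟨V, hV⟩ => ?_
  have := Module.finite_of_finrank_pos (hV ▸ hj)
  obtain ⟨⟨u, huV, hu⟩⟩ := nonempty_of_one_le_finrank (hV ▸ hj)
  exact (h u hu).trans (le_supRatio hB V huV hu)

theorem minmaxVal_le_mul {A' : H →L[ℂ] H} (hA' : ∀ u : H, 0 ≤ (inner ℂ (A' u) u).re) {j : ℕ}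
    (hj : 1 ≤ j) {K : ℝ} (hK : 0 ≤ K)
    (h : ∀ u : H, u ≠ 0 → rayleighRatio A' B u ≤ K * rayleighRatio A B u) :
    minmaxVal A' B j ≤ K * minmaxVal A B j := by
  have := nonempty_finrank_eq_of_not_finiteDimensional hH j
  rw [minmaxVal_eq_iInf_supRatio A B, Real.mul_iInf_of_nonneg hK]
  refine le_ciInf fun ⟨V, hV⟩ => (minmaxVal_le_supRatio hB hA' hV).trans ?_
  have := Module.finite_of_finrank_pos (hV ▸ hj)
  exact supRatio_le (hV ▸ hj) fun u huV hu =>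
    (h u hu).trans (mul_le_mul_of_nonneg_left (le_supRatio hB V huV hu) hK)

theorem abs_minmaxVal_sub_le {A' : H →L[ℂ] H} {c : ℝ} (hc : 0 < c)
    (hA : ∀ u : H, c * ‖u‖ ^ 2 ≤ (inner ℂ (A u) u).re) (hd : ‖A' - A‖ < c) {j : ℕ}
    (hj : 1 ≤ j) : |minmaxVal A' B j - minmaxVal A B j| ≤ ‖A' - A‖ / c * minmaxVal A B j := by
  set η := ‖A' - A‖ / c
  have hη : η < 1 := (div_lt_one hc).2 hd
  have hclose : ∀ u : H,
      |(inner ℂ (A' u) u).re - (inner ℂ (A u) u).re| ≤ η * (inner ℂ (A u) u).re := by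
    intro u
    have := (A' - A).abs_re_inner_self_le u
    rw [sub_apply, inner_sub_left, Complex.sub_re] at this
    calc _ ≤ ‖A' - A‖ * ‖u‖ ^ 2 := this
      _ = η * (c * ‖u‖ ^ 2) := by simp only [η]; field_simp
      _ ≤ η * (inner ℂ (A u) u).re := by gcongr; exact hA u
  have hA0 := OpCoercive.re_inner_nonneg ⟨c, hc, hA⟩
  have hA'0 : ∀ u : H, 0 ≤ (inner ℂ (A' u) u).re :=
    fun u => by nlinarith [abs_le.1 (hclose u), hA0 u]
  have hup := minmaxVal_le_mul hB hH (A := A) hA'0 hj (K := 1 + η) (by positivity) fun u hu => by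
    rw [rayleighRatio, rayleighRatio, ← mul_div_assoc, div_le_div_iff_of_pos_right (hB u hu)]
    linarith [abs_le.1 (hclose u)]
  have hlow := minmaxVal_le_mul hB hH (A := A') hA0 hj (K := (1 - η)⁻¹)
    (by rw [inv_nonneg]; linarith) fun u hu => by
    rw [rayleighRatio, rayleighRatio, ← mul_div_assoc, div_le_div_iff_of_pos_right (hB u hu),
      le_inv_mul_iff₀ (by linarith)]
    linarith [abs_le.1 (hclose u)]
  rw [le_inv_mul_iff₀ (by linarith)] at hlow
  rw [abs_le]
  constructor <;> linarith

theorem continuousOn_minmaxVal {X : Type*} [TopologicalSpace X] {A : X → (H →L[ℂ] H)}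
    {s : Set X} (hA : ContinuousOn A s) (hcoer : ∀ x ∈ s, OpCoercive (A x)) {j : ℕ}
    (hj : 1 ≤ j) : ContinuousOn (fun x => minmaxVal (A x) B j) s := by
  intro x hx
  obtain ⟨c, hc, hcA⟩ := hcoer x hx
  have hdist : Tendsto (fun y => ‖A y - A x‖) (𝓝[s] x) (𝓝 0) :=
    tendsto_iff_norm_sub_tendsto_zero.1 (hA x hx)
  have hbound : Tendsto (fun y => ‖A y - A x‖ / c * minmaxVal (A x) B j) (𝓝[s] x) (𝓝 0) := by
    simpa using (hdist.div_const c).mul_const (minmaxVal (A x) B j)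
  refine tendsto_iff_norm_sub_tendsto_zero.2
    (squeeze_zero' (Eventually.of_forall fun _ => norm_nonneg _) ?_ hbound)
  filter_upwards [(tendsto_order.1 hdist).2 c hc] with y hy
  exact abs_minmaxVal_sub_le hB hH hc hcA hy hj

variable [CompleteSpace H] (hAsa : IsSelfAdjoint A) (hAc : OpCoercive A)
  (hBc : IsCompactOperator B) (hBsa : IsSelfAdjoint B)
include hAsa hAc hBc hBsa

theorem lt_minmaxVal_of_re_inner_sub_pos {μ : ℝ}
    (hpos : ∀ u : H, u ≠ 0 → 0 < (inner ℂ (A u - (μ : ℂ) • B u) u).re) {j : ℕ} (hj : 1 ≤ j) :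
    μ < minmaxVal A B j := by
  obtain ⟨δ, hδ, hδS⟩ := hAc.sub_of_re_inner_pos (hBc.smul (μ : ℂ))
    (hAsa.sub (.smul (Complex.conj_ofReal μ) hBsa)) hpos
  refine (lt_add_of_pos_right μ (by positivity : 0 < δ / (‖B‖ + 1))).trans_le
    (le_minmaxVal hB hH hj fun u hu => ?_)
  have hδu := hδS u
  have hBu := (abs_le.1 (B.abs_re_inner_self_le u)).2
  rw [sub_apply, smul_apply, re_inner_sub_ofReal_smul] at hδu
  rw [rayleighRatio, le_div_iff₀ (hB u hu), add_mul]
  have : δ / (‖B‖ + 1) * (inner ℂ (B u) u).re ≤ δ * ‖u‖ ^ 2 := by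
    rw [div_mul_eq_mul_div, div_le_iff₀ (by positivity)]
    calc δ * (inner ℂ (B u) u).re ≤ δ * (‖B‖ * ‖u‖ ^ 2) := by gcongr
      _ ≤ δ * ‖u‖ ^ 2 * (‖B‖ + 1) := by linarith [mul_nonneg hδ.le (sq_nonneg ‖u‖)]
  linarith

theorem exists_eigenvector_of_minmaxVal_one_eq {μ : ℝ} (hμ : minmaxVal A B 1 = μ) :
    ∃ u : H, u ≠ 0 ∧ A u = (μ : ℂ) • B u := by
  have hle : ∀ u : H, u ≠ 0 → μ ≤ rayleighRatio A B u := by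
    intro u hu
    have hspan := finrank_span_singleton (K := ℂ) hu
    refine hμ ▸ (minmaxVal_le_supRatio hB hAc.re_inner_nonneg hspan).trans
      (supRatio_le hspan.ge fun v hv hv0 => ?_)
    obtain ⟨c, rfl⟩ := Submodule.mem_span_singleton.1 hv
    exact (rayleighRatio_smul (by rintro rfl; simp at hv0) u).le
  have hform : ∀ u : H, 0 ≤ (inner ℂ (A u - (μ : ℂ) • B u) u).re := by
    intro u
    rcases eq_or_ne u 0 with rfl | hu
    · simp
    have := hle u hu
    rw [rayleighRatio, le_div_iff₀ (hB u hu)] at this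
    rw [re_inner_sub_ofReal_smul]
    linarith
  have hS : (A - (μ : ℂ) • B).IsPositive :=
    (isPositive_def' (T := A - (μ : ℂ) • B)).2
      ⟨hAsa.sub (.smul (Complex.conj_ofReal μ) hBsa), hform⟩
  by_contra! hne
  refine (lt_minmaxVal_of_re_inner_sub_pos hB hH hAsa hAc hBc hBsa (fun u hu => ?_)
    le_rfl).ne' hμ
  refine (hform u).lt_of_ne' fun h0 => hne u hu ?_
  exact sub_eq_zero.1 (hS.apply_eq_zero_of_re_inner_eq_zero h0)

end MinMax

theorem stmt2_general {H : Type*} [NormedAddCommGroup H] [InnerProductSpace ℂ H] [CompleteSpace H]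
    (hH : ¬ FiniteDimensional ℂ H)
    (k₀ k₁ : ℝ) (hk₀k₁ : k₀ < k₁)
    (A : ℝ → (H →L[ℂ] H))
    (hAcont : ContinuousOn A (Set.Icc k₀ k₁))
    (hAsa : ∀ k ∈ Set.Icc k₀ k₁, IsSelfAdjoint (A k))
    (hAcoer : ∀ k ∈ Set.Icc k₀ k₁, OpCoercive (A k))
    (B : H →L[ℂ] H) (hBc : IsCompactOperator B) (hBsa : IsSelfAdjoint B)
    (hBpos : ∀ u : H, u ≠ 0 → 0 < (inner ℂ (B u) u : ℂ).re)
    (m : ℕ) (hm : 1 ≤ m)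
    (hpos : ∀ u : H, u ≠ 0 →
      0 < (inner ℂ (A k₀ u - ((k₀ : ℂ) ^ 2) • B u) u : ℂ).re)
    (hneg : ∃ W : Submodule ℂ H, Module.finrank ℂ W = m ∧
      ∀ u ∈ W, (inner ℂ (A k₁ u - ((k₁ : ℂ) ^ 2) • B u) u : ℂ).re ≤ 0) :
    (∀ j : ℕ, 1 ≤ j → j ≤ m →
      ∃ k ∈ Set.Icc k₀ k₁, minmaxVal (A k) B j = k ^ 2) ∧
    (∃ k ∈ Set.Icc k₀ k₁, ∃ u : H, u ≠ 0 ∧ A k u = ((k : ℂ) ^ 2) • B u) := by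
  obtain ⟨W, hWm, hW⟩ := hneg
  have hk₀ : k₀ ∈ Set.Icc k₀ k₁ := Set.left_mem_Icc.2 hk₀k₁.le
  have hk₁ : k₁ ∈ Set.Icc k₀ k₁ := Set.right_mem_Icc.2 hk₀k₁.le
  have hlevel : ∀ j : ℕ, 1 ≤ j → j ≤ m → ∃ k ∈ Set.Icc k₀ k₁, minmaxVal (A k) B j = k ^ 2 := by
    intro j hj hjm
    have hcont : ContinuousOn (fun k => minmaxVal (A k) B j - k ^ 2) (Set.Icc k₀ k₁) :=
      (continuousOn_minmaxVal hBpos hH hAcont hAcoer hj).sub (continuous_pow 2).continuousOn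
    have hlow : k₀ ^ 2 < minmaxVal (A k₀) B j :=
      lt_minmaxVal_of_re_inner_sub_pos hBpos hH (hAsa k₀ hk₀) (hAcoer k₀ hk₀) hBc hBsa
        (by simpa using hpos) hj
    have hup : minmaxVal (A k₁) B j ≤ k₁ ^ 2 :=
      minmaxVal_le_of_re_inner_sub_nonpos hBpos (hAcoer k₁ hk₁).re_inner_nonneg
        (by simpa using hW) hj (hWm ▸ hjm)
    obtain ⟨k, hk, hk0⟩ := intermediate_value_Icc' hk₀k₁.le hcont
      (show (0 : ℝ) ∈ Set.Icc _ _ from ⟨by linarith, by linarith⟩)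
    exact ⟨k, hk, sub_eq_zero.1 hk0⟩
  obtain ⟨k, hk, hk1⟩ := hlevel 1 le_rfl hm
  obtain ⟨u, hu, hAu⟩ := exists_eigenvector_of_minmaxVal_one_eq hBpos hH (hAsa k hk)
    (hAcoer k hk) hBc hBsa hk1
  exact ⟨hlevel, k, hk, u, hu, by simpa using hAu⟩

theorem stmt2 {H : Type*} [NormedAddCommGroup H] [InnerProductSpace ℂ H] [CompleteSpace H]
    [TopologicalSpace.SeparableSpace H] (hH : ¬ FiniteDimensional ℂ H)
    (k₀ k₁ : ℝ) (hk₀ : 0 < k₀) (hk₀k₁ : k₀ < k₁)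
    (A : ℝ → (H →L[ℂ] H))
    (hAcont : ContinuousOn A (Set.Icc k₀ k₁))
    (hAsa : ∀ k ∈ Set.Icc k₀ k₁, IsSelfAdjoint (A k))
    (hAcoer : ∀ k ∈ Set.Icc k₀ k₁, OpCoercive (A k))
    (B : H →L[ℂ] H) (hBc : IsCompactOperator B) (hBsa : IsSelfAdjoint B)
    (hBpos : ∀ u : H, u ≠ 0 → 0 < (inner ℂ (B u) u : ℂ).re)
    (m : ℕ) (hm : 1 ≤ m)
    (hpos : ∀ u : H, u ≠ 0 →
      0 < (inner ℂ (A k₀ u - ((k₀ : ℂ) ^ 2) • B u) u : ℂ).re)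
    (hneg : ∃ W : Submodule ℂ H, Module.finrank ℂ W = m ∧
      ∀ u ∈ W, (inner ℂ (A k₁ u - ((k₁ : ℂ) ^ 2) • B u) u : ℂ).re ≤ 0) :
    (∀ j : ℕ, 1 ≤ j → j ≤ m →
      ∃ k ∈ Set.Icc k₀ k₁, minmaxVal (A k) B j = k ^ 2) ∧
    (∃ k ∈ Set.Icc k₀ k₁, ∃ u : H, u ≠ 0 ∧ A k u = ((k : ℂ) ^ 2) • B u) :=
  stmt2_general hH k₀ k₁ hk₀k₁ A hAcont hAsa hAcoer B hBc hBsa hBpos m hm hpos hneg
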